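/- arXiv:1305.2386 — 3 statements merged into one kernel-verified Lean document; each statement's English description precedes it below -/
import Mathlib

section
/- Sequential pairwise voting with a fixed agenda does not prevent social disappointment: there exists an agenda and a preference profile (for example, for 3 alternatives with agenda (b, c, a) and 4 voters, where voters 1 and 2 have list (a, b, c), voter 3 has (b, c, a) and voter 4 has (c, b, a)) in which some winning alternative of sequential pairwise voting is ranked last by at least half of the voters. -/
open Finset

attribute [local instance] Classical.propDecidable

noncomputable section

/-- A preference profile for `n` voters: each voter has a ballot, a list of
alternatives ordered from most preferred (head) to least preferred (last). -/
abbrev Profile (n : ℕ) (A : Type*) := Fin n → List A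

variable {A : Type*} [DecidableEq A]

/-- A valid profile: every ballot is a strict linear order on the alternatives,
i.e. a duplicate-free list containing every alternative. -/
def IsProfile {n : ℕ} (P : Profile n A) : Prop :=
  ∀ i, (P i).Nodup ∧ ∀ a : A, a ∈ P i

/-- The voter with ballot `l` prefers `x` to `y`. -/
def Prefers (l : List A) (x y : A) : Prop := l.idxOf x < l.idxOf y

/-- The number of voters who rank `a` last (at the bottom of their list). -/
def lastCount {n : ℕ} (P : Profile n A) (a : A) : ℕ :=
  (univ.filter fun i => (P i).getLast? = some a).card

/-- The number of voters who rank `a` first (at the top of their list). -/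
def firstCount {n : ℕ} (P : Profile n A) (a : A) : ℕ :=
  (univ.filter fun i => (P i).head? = some a).card

/-- The number of voters preferring `x` to `y`. -/
def prefCount {n : ℕ} (P : Profile n A) (x y : A) : ℕ :=
  (univ.filter fun i => Prefers (P i) x y).card

/-- `x` defeats `y` in a pairwise majority contest: strictly more voters
prefer `x` to `y` than prefer `y` to `x`. -/
def Defeats {n : ℕ} (P : Profile n A) (x y : A) : Prop :=
  prefCount P y x < prefCount P x y

/-- Condorcet's method: the winners are the alternatives defeated by no other alternative. -/
def CondorcetWinners {n : ℕ} (P : Profile n A) : Set A :=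
  {a | ∀ b, ¬ Defeats P b a}

/-- `a` is a Condorcet winner: it is the unique winner of Condorcet's method. -/
def IsCondorcetWinner {n : ℕ} (P : Profile n A) (a : A) : Prop :=
  CondorcetWinners P = {a}

/-- One contest of sequential pairwise voting: the current survivors `S` face the
next agenda alternative `c`; a survivor is eliminated iff `c` defeats it, and `c`
survives iff no member of `S` defeats `c` (a tie eliminates neither). -/
def spvStep {n : ℕ} (P : Profile n A) (S : Finset A) (c : A) : Finset A :=
  (S.filter fun x => ¬ Defeats P c x) ∪
    (if ∀ y ∈ S, ¬ Defeats P y c then {c} else ∅)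

/-- Sequential pairwise voting with the fixed agenda: the first agenda alternative
starts as survivor and the remaining agenda alternatives are faced in order;
the winners are the alternative(s) surviving the final contest. -/
def SPVWinners {n : ℕ} (P : Profile n A) : List A → Finset A
  | [] => ∅
  | c :: rest => rest.foldl (spvStep P) {c}

/-! In the profile below `b` beats `c` by 3 votes to 1 while `a` and `b` tie 2–2. Along the
agenda `(b, c, a)`, `b` eliminates `c` and then ties with `a`, so `a` is among the winners,
although the two voters with lists `(b, c, a)` and `(c, b, a)` rank it last. -/

section SequentialPairwiseVoting

variable {n : ℕ} (P : Profile n A) {x y : A}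

theorem Defeats.not_defeats (h : Defeats P x y) : ¬ Defeats P y x := lt_asymm h

theorem spvStep_singleton_of_defeats (h : Defeats P x y) : spvStep P {x} y = {x} := by
  simp [spvStep, filter_singleton, h, h.not_defeats]

theorem spvStep_singleton_of_tie (hxy : ¬ Defeats P x y) (hyx : ¬ Defeats P y x) :
    spvStep P {x} y = {x, y} := by
  rw [spvStep, filter_singleton, if_pos hyx, if_pos (by simpa using hxy), insert_eq]

theorem spvWinners_cons_cons_of_defeats (h : Defeats P x y) (rest : List A) :
    SPVWinners P (x :: y :: rest) = SPVWinners P (x :: rest) := by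
  simp only [SPVWinners, List.foldl_cons, spvStep_singleton_of_defeats P h]

theorem spvWinners_pair_of_tie (hxy : ¬ Defeats P x y) (hyx : ¬ Defeats P y x) :
    SPVWinners P [x, y] = {x, y} :=
  spvStep_singleton_of_tie P hxy hyx

end SequentialPairwiseVoting

/-- The alternatives `a, b, c` are encoded as `0, 1, 2`. -/
def exampleProfile : Profile 4 (Fin 3) := ![[0, 1, 2], [0, 1, 2], [1, 2, 0], [2, 1, 0]]

theorem isProfile_exampleProfile : IsProfile exampleProfile := by
  unfold IsProfile
  decide

theorem defeats_exampleProfile_one_two : Defeats exampleProfile 1 2 := by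
  simp only [Defeats, prefCount, card_filter, Fin.sum_univ_four]
  simp [exampleProfile, Prefers]

theorem not_defeats_exampleProfile_zero_one : ¬ Defeats exampleProfile 0 1 := by
  simp only [Defeats, prefCount, card_filter, Fin.sum_univ_four]
  simp [exampleProfile, Prefers]

theorem not_defeats_exampleProfile_one_zero : ¬ Defeats exampleProfile 1 0 := by
  simp only [Defeats, prefCount, card_filter, Fin.sum_univ_four]
  simp [exampleProfile, Prefers]

theorem lastCount_exampleProfile_zero : lastCount exampleProfile 0 = 2 := by
  simp only [lastCount, card_filter, Fin.sum_univ_four]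
  simp [exampleProfile]

/-- Sequential pairwise voting with a fixed agenda does not prevent
social disappointment: there are an agenda and a profile (3 alternatives, 4 voters)
in which some sequential-pairwise-voting winner is ranked last by at least half
of the voters. -/
theorem spv_not_nonSD :
    ∃ (agenda : List (Fin 3)) (P : Profile 4 (Fin 3)),
      agenda.Nodup ∧ (∀ x : Fin 3, x ∈ agenda) ∧ IsProfile P ∧
      ∃ a ∈ SPVWinners P agenda, 4 ≤ 2 * lastCount P a := by
  refine ⟨[1, 2, 0], exampleProfile, by decide, by decide, isProfile_exampleProfile, 0, ?_, ?_⟩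
  · rw [spvWinners_cons_cons_of_defeats _ defeats_exampleProfile_one_two,
      spvWinners_pair_of_tie _ not_defeats_exampleProfile_one_zero
        not_defeats_exampleProfile_zero_one]
    exact mem_insert_of_mem (mem_singleton_self 0)
  · rw [lastCount_exampleProfile_zero]
end
end

section
/- The L.P.R. procedure does not satisfy monotonicity: there exist a preference profile (for 3 alternatives and 5 voters) in which some alternative x is an L.P.R. winner, and a second profile obtained from the first by a single voter moving x up one spot on his list (all else unchanged), in which x is not an L.P.R. winner. -/
open Finset

attribute [local instance] Classical.propDecidable

noncomputable section

variable {A : Type*} [DecidableEq A]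

/-- The bottom alternative of ballot `l` among the still-remaining alternatives `S`. -/
def bottomAmong (S : Finset A) (l : List A) : Option A :=
  (l.filter fun x => decide (x ∈ S)).getLast?

/-- The number of voters ranking `a` last among the remaining alternatives `S`. -/
def hLastCount {n : ℕ} (P : Profile n A) (S : Finset A) (a : A) : ℕ :=
  (univ.filter fun i => bottomAmong S (P i) = some a).card

/-- One round of the L.P.R. procedure: delete from `S` the alternative(s)
currently appearing at the bottom of the largest number of lists,
i.e. keep those that are not maximal. -/
def lprStep {n : ℕ} (P : Profile n A) (S : Finset A) : Finset A :=
  S.filter fun a => ∃ b ∈ S, hLastCount P S a < hLastCount P S b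

/-- Iterating the L.P.R. rounds; once a round would delete every remaining
alternative, the process stops (those alternatives are the ones deleted last). -/
def lprIter {n : ℕ} [Fintype A] (P : Profile n A) : ℕ → Finset A
  | 0 => Finset.univ
  | k + 1 =>
      let S := lprIter P k
      if lprStep P S = ∅ then S else lprStep P S

/-- L.P.R. winners: the alternative(s) deleted in the final round. -/
def LPRWinners {n : ℕ} [Fintype A] (P : Profile n A) : Finset A :=
  lprIter P (Fintype.card A)

/-- `l'` is obtained from `l` by moving `x` up exactly one spot. -/
def MovesUpOne (l l' : List A) (x : A) : Prop :=
  ∃ (u v : List A) (y : A), l = u ++ y :: x :: v ∧ l' = u ++ x :: y :: v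

/-! In `before`, alternatives 0 and 2 are each ranked last twice and 1 only once, so the first
round deletes 0 and 2 and 1 wins. Voter 2 moving 1 above 2 puts 2 at the bottom of a third
ballot: now 2 alone is deleted first, and among the remaining 0 and 1 it is 1 that sits at the
bottom of three ballots against two, so 1 is deleted and 0 wins. -/

section LPR

variable {n : ℕ}

theorem mem_lprStep {P : Profile n A} {S : Finset A} {a : A} :
    a ∈ lprStep P S ↔ a ∈ S ∧ ∃ b ∈ S, hLastCount P S a < hLastCount P S b :=
  mem_filter

@[simp]
theorem lprStep_singleton (P : Profile n A) (c : A) : lprStep P {c} = ∅ := by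
  ext a
  simp only [mem_lprStep, mem_singleton, exists_eq_left, notMem_empty, iff_false, not_and]
  rintro rfl
  exact lt_irrefl _

variable [Fintype A] {P : Profile n A}

theorem lprIter_succ_of_lprStep_ne_empty {k : ℕ} (h : lprStep P (lprIter P k) ≠ ∅) :
    lprIter P (k + 1) = lprStep P (lprIter P k) :=
  if_neg h

theorem lprIter_eq_singleton_of_le {k m : ℕ} {c : A} (h : lprIter P k = {c}) (hkm : k ≤ m) :
    lprIter P m = {c} := by
  induction m, hkm using Nat.le_induction with
  | base => exact h
  | succ m _ ih => simp [lprIter, ih]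

theorem lprWinners_eq_singleton {k : ℕ} {c : A} (h : lprIter P k = {c})
    (hk : k ≤ Fintype.card A) : LPRWinners P = {c} :=
  lprIter_eq_singleton_of_le h hk

end LPR

namespace LPRCounterexample

def before : Profile 5 (Fin 3) := ![[0, 1, 2], [0, 1, 2], [0, 2, 1], [1, 2, 0], [1, 2, 0]]

def after : Profile 5 (Fin 3) := Function.update before 2 [0, 1, 2]

theorem isProfile_before : IsProfile before := by
  unfold IsProfile
  decide

theorem isProfile_after : IsProfile after := by
  unfold IsProfile
  decide

theorem movesUpOne_before_after : MovesUpOne (before 2) (after 2) 1 :=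
  ⟨[0], [], 2, rfl, rfl⟩

theorem lprStep_before_univ : lprStep before univ = {1} := by decide

theorem lprStep_after_univ : lprStep after univ = {0, 1} := by decide

theorem lprStep_after_pair : lprStep after {0, 1} = {0} := by decide

theorem lprWinners_before : LPRWinners before = {1} := by
  refine lprWinners_eq_singleton (k := 1) ?_ (by simp)
  rw [lprIter_succ_of_lprStep_ne_empty] <;> simp [lprIter, lprStep_before_univ]

theorem lprWinners_after : LPRWinners after = {0} := by
  have round_one : lprIter after 1 = {0, 1} := by
    rw [lprIter_succ_of_lprStep_ne_empty] <;> simp [lprIter, lprStep_after_univ]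
  refine lprWinners_eq_singleton (k := 2) ?_ (by simp)
  rw [lprIter_succ_of_lprStep_ne_empty] <;> simp [round_one, lprStep_after_pair]

end LPRCounterexample

/-- the L.P.R. procedure does not satisfy monotonicity: there are a
profile (3 alternatives, 5 voters) at which `x` is an L.P.R. winner and a second
profile obtained from it by a single voter moving `x` up one spot, at which `x`
is not an L.P.R. winner. -/
theorem lpr_not_monotone :
    ∃ (P P' : Profile 5 (Fin 3)) (x : Fin 3) (j : Fin 5),
      IsProfile P ∧ IsProfile P' ∧
      x ∈ LPRWinners P ∧
      (∀ i, i ≠ j → P' i = P i) ∧ MovesUpOne (P j) (P' j) x ∧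
      x ∉ LPRWinners P' :=
  open LPRCounterexample in
  ⟨before, after, 1, 2, isProfile_before, isProfile_after, by simp [lprWinners_before],
    fun _ hi => Function.update_of_ne hi _ _, movesUpOne_before_after, by simp [lprWinners_after]⟩
end
end

section
/- For profiles over exactly 3 alternatives, a Condorcet winner is never socially disappointing: if alternative a is the unique winner of Condorcet's method at a profile, then a is ranked last by strictly fewer than half of the voters. -/
open Finset

attribute [local instance] Classical.propDecidable

noncomputable section

variable {A : Type*} [DecidableEq A]

/-!
Every voter who ranks `a` last prefers each rival to `a`. If these voters are at least half of
the electorate, an undefeated `a` can therefore at best tie each rival. With exactly two rivals,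
the one that does not lose their head-to-head contest is then undefeated too, so `a` is not the
unique winner.
-/

lemma prefers_of_getLast?_eq_some {l : List A} (hl : l.Nodup) {a b : A} (hb : b ∈ l)
    (hba : b ≠ a) (hlast : l.getLast? = some a) : Prefers l b a := by
  obtain ⟨ys, rfl⟩ := List.getLast?_eq_some_iff.mp hlast
  have ha : a ∉ ys := fun ha => List.disjoint_of_nodup_append hl ha (List.mem_singleton_self a)
  have hb' : b ∈ ys := by simpa [hba] using hb
  unfold Prefers
  rw [List.idxOf_append_of_mem hb', List.idxOf_append_of_notMem ha]
  exact Nat.lt_add_right _ (List.idxOf_lt_length_iff.mpr hb')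

lemma not_prefers_iff_prefers {l : List A} {x y : A} (hx : x ∈ l) (hxy : x ≠ y) :
    ¬ Prefers l x y ↔ Prefers l y x := by
  have hne : l.idxOf x ≠ l.idxOf y := fun h => hxy ((List.idxOf_inj hx).mp h)
  unfold Prefers
  omega

section Profile

variable {n : ℕ} {P : Profile n A}

lemma prefCount_add_prefCount (hP : IsProfile P) {x y : A} (hxy : x ≠ y) :
    prefCount P x y + prefCount P y x = n := by
  have hswap : (univ.filter fun i => Prefers (P i) y x)
      = univ.filter fun i => ¬ Prefers (P i) x y :=
    filter_congr fun i _ => (not_prefers_iff_prefers ((hP i).2 x) hxy).symm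
  rw [prefCount, prefCount, hswap, card_filter_add_card_filter_not, card_univ, Fintype.card_fin]

lemma lastCount_le_prefCount (hP : IsProfile P) {a d : A} (hda : d ≠ a) :
    lastCount P a ≤ prefCount P d a :=
  card_le_card <| monotone_filter_right _ fun i _ hi =>
    prefers_of_getLast?_eq_some (hP i).1 ((hP i).2 d) hda hi

lemma defeats_irrefl (x : A) : ¬ Defeats P x x := lt_irrefl _

lemma prefCount_eq_of_mem_condorcetWinners (hP : IsProfile P) {a : A}
    (ha : a ∈ CondorcetWinners P) (hlast : n ≤ 2 * lastCount P a) {d : A} (hda : d ≠ a) :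
    prefCount P a d = prefCount P d a := by
  have hsum := prefCount_add_prefCount hP hda
  have hle := lastCount_le_prefCount hP hda
  have hnd : ¬ Defeats P d a := ha d
  unfold Defeats at hnd
  omega

lemma mem_condorcetWinners_of_tie [Fintype A] {a b c : A} (hrivals : univ.erase a = {b, c})
    (htie : prefCount P a b = prefCount P b a) (hcb : ¬ Defeats P c b) :
    b ∈ CondorcetWinners P := by
  intro w
  obtain rfl | hwa := eq_or_ne w a
  · exact htie.le.not_gt
  have hw : w ∈ ({b, c} : Finset A) := hrivals ▸ mem_erase.mpr ⟨hwa, mem_univ w⟩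
  simp only [mem_insert, mem_singleton] at hw
  rcases hw with rfl | rfl
  · exact defeats_irrefl w
  · exact hcb

lemma condorcetWinners_ne_singleton [Fintype A] (hA : Fintype.card A = 3) {a : A}
    (htie : ∀ d, d ≠ a → prefCount P a d = prefCount P d a) :
    CondorcetWinners P ≠ {a} := by
  have hcard : (univ.erase a).card = 2 := by rw [card_erase_of_mem (mem_univ a), card_univ, hA]
  obtain ⟨b, c, -, hrivals⟩ := card_eq_two.mp hcard
  have hb : b ≠ a := ne_of_mem_erase (hrivals ▸ mem_insert_self b {c})
  have hc : c ≠ a := ne_of_mem_erase (hrivals ▸ mem_insert_of_mem (mem_singleton_self c))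
  intro hwin
  have honly : ∀ x ∈ CondorcetWinners P, x = a := fun x hx => by rwa [hwin] at hx
  rcases le_total (prefCount P c b) (prefCount P b c) with hcb | hbc
  · exact hb (honly b (mem_condorcetWinners_of_tie hrivals (htie b hb) hcb.not_gt))
  · rw [pair_comm] at hrivals
    exact hc (honly c (mem_condorcetWinners_of_tie hrivals (htie c hc) hbc.not_gt))

end Profile

/-- over exactly 3 alternatives, a Condorcet winner is never
socially disappointing: it is ranked last by strictly fewer than half of the
voters. -/
theorem condorcet_winner_not_disappointing {A : Type*} [Fintype A] [DecidableEq A]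
    (hA : Fintype.card A = 3) {n : ℕ} (P : Profile n A) (hP : IsProfile P)
    (a : A) (h : IsCondorcetWinner P a) : 2 * lastCount P a < n := by
  by_contra! hlast
  have ha : a ∈ CondorcetWinners P := by rw [h]; rfl
  exact condorcetWinners_ne_singleton hA
    (fun d hda => prefCount_eq_of_mem_condorcetWinners hP ha hlast hda) h
end
end
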